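/- arXiv:2503.00885 — 9 statements merged into one kernel-verified Lean document; each statement's English description precedes it below -/
import Mathlib

section
/- Let P be a set of approval profiles and let c_i ≠ c_j be two candidates such that there exist profiles A, A' ∈ P with AS(c_i, A) > AS(c_j, A) and AS(c_j, A') > AS(c_i, A'). Then every committee W ⊆ C with |W| = k that is SWM in every profile of P satisfies either {c_i, c_j} ⊆ W or {c_i, c_j} ∩ W = ∅. -/
/-- The approval score of candidate `c` in profile `A`: the number of voters approving `c`. -/
def approvalScore {V C : Type*} [Fintype V] [DecidableEq C]
    (A : V → Finset C) (c : C) : ℕ :=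
  (Finset.univ.filter fun i => c ∈ A i).card

/-- The social welfare of committee `W` in profile `A`. -/
def socialWelfare {V C : Type*} [Fintype V] [DecidableEq C]
    (A : V → Finset C) (W : Finset C) : ℕ :=
  ∑ i : V, (W ∩ A i).card

/-- `W` is social-welfare maximizing (among committees of size `k`) in profile `A`. -/
def isSWM {V C : Type*} [Fintype V] [DecidableEq C]
    (k : ℕ) (A : V → Finset C) (W : Finset C) : Prop :=
  ∀ W' : Finset C, W'.card = k → socialWelfare A W' ≤ socialWelfare A W

lemma sw_eq_sum {V C : Type*} [Fintype V] [DecidableEq C]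
    (A : V → Finset C) (W : Finset C) :
    socialWelfare A W = ∑ c ∈ W, approvalScore A c := by
  unfold socialWelfare approvalScore
  have h : ∀ i, (W ∩ A i).card = ∑ c ∈ W, if c ∈ A i then 1 else 0 := fun i => by
    rw [← Finset.filter_mem_eq_inter, Finset.card_filter]
  simp only [h]
  rw [Finset.sum_comm]
  refine Finset.sum_congr rfl fun c _ => ?_
  rw [Finset.card_filter]

lemma swap_helper {V C : Type*} [Fintype V] [DecidableEq C]
    (B : V → Finset C) (W : Finset C) (a b : C) (ha : a ∈ W) (hb : b ∉ W)
    (hle : socialWelfare B (insert b (W.erase a)) ≤ socialWelfare B W) :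
    approvalScore B b ≤ approvalScore B a := by
  rw [sw_eq_sum, sw_eq_sum] at hle
  rw [Finset.sum_insert (by simp [hb]), ← Finset.add_sum_erase _ _ ha] at hle
  omega

/-- If `c_i ≠ c_j` are two candidates such that some profile of `P` gives
`c_i` a strictly higher approval score than `c_j` and some profile of `P` gives `c_j` a
strictly higher approval score than `c_i`, then every size-`k` committee that is SWM in
every profile of `P` either contains both `c_i` and `c_j` or neither. -/
theorem nec_swm_both_or_neither
    {V C : Type*} [Fintype V] [Fintype C] [DecidableEq C]
    (k : ℕ) (hk1 : 1 ≤ k) (hkm : k ≤ Fintype.card C)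
    (P : Set (V → Finset C)) (ci cj : C) (hij : ci ≠ cj)
    (A A' : V → Finset C) (hA : A ∈ P) (hA' : A' ∈ P)
    (h1 : approvalScore A cj < approvalScore A ci)
    (h2 : approvalScore A' ci < approvalScore A' cj)
    (W : Finset C) (hW : W.card = k) (hSWM : ∀ B ∈ P, isSWM k B W) :
    (ci ∈ W ∧ cj ∈ W) ∨ (ci ∉ W ∧ cj ∉ W) := by
  by_cases hi : ci ∈ W <;> by_cases hj : cj ∈ W
  · exact Or.inl ⟨hi, hj⟩
  · exfalso
    have hcard : (insert cj (W.erase ci)).card = k := by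
      rw [Finset.card_insert_of_notMem (by simp [hj]),
        Finset.card_erase_of_mem hi, hW]
      omega
    have := swap_helper A' W ci cj hi hj (hSWM A' hA' _ hcard)
    omega
  · exfalso
    have hcard : (insert ci (W.erase cj)).card = k := by
      rw [Finset.card_insert_of_notMem (by simp [hi]),
        Finset.card_erase_of_mem hj, hW]
      omega
    have := swap_helper A W cj ci hj hi (hSWM A hA _ hcard)
    omega
  · exact Or.inr ⟨hi, hj⟩
end

section
/- In the lottery model, for any two candidates c, c' ∈ C, the inequality AS(c, A) ≥ AS(c', A) holds for every plausible profile A if and only if Σ_{i ∈ V} max_{S ∈ supp(Δ_i)} (1[c' ∈ S] − 1[c ∈ S]) ≤ 0, where 1[·] denotes the indicator function. -/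
open scoped Classical

lemma approvalScore_eq_sum {V C : Type*} [Fintype V] [DecidableEq C]
    (A : V → Finset C) (c : C) :
    (approvalScore A c : ℤ) = ∑ i : V, (if c ∈ A i then (1 : ℤ) else 0) := by
  rw [approvalScore, Finset.card_filter]
  push_cast
  rfl

lemma score_le_iff {V C : Type*} [Fintype V] [DecidableEq C]
    (A : V → Finset C) (c c' : C) :
    approvalScore A c' ≤ approvalScore A c ↔
      ∑ i : V, ((if c' ∈ A i then (1 : ℤ) else 0) - (if c ∈ A i then (1 : ℤ) else 0)) ≤ 0 := by
  rw [Finset.sum_sub_distrib, sub_nonpos, ← approvalScore_eq_sum, ← approvalScore_eq_sum]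
  exact_mod_cast Iff.rfl

/-- In the lottery model, `AS(c, A) ≥ AS(c', A)` holds for every plausible
profile `A` iff `Σ_{i ∈ V} max_{S ∈ supp Δ_i} (1[c' ∈ S] − 1[c ∈ S]) ≤ 0`. -/
theorem dominance_iff_sum_of_max_nonpos
    {V C : Type*} [Fintype V] [Fintype C] [DecidableEq C]
    (Δ : V → Finset C → ℝ)
    (hnonneg : ∀ i S, 0 ≤ Δ i S)
    (hsum : ∀ i, ∑ S : Finset C, Δ i S = 1)
    (hsupp : ∀ i, (Finset.univ.filter fun S : Finset C => 0 < Δ i S).Nonempty)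
    (c c' : C) :
    (∀ A : V → Finset C, (∀ i, 0 < Δ i (A i)) → approvalScore A c' ≤ approvalScore A c) ↔
      ∑ i : V, (Finset.univ.filter fun S : Finset C => 0 < Δ i S).sup' (hsupp i)
        (fun S => (if c' ∈ S then (1 : ℤ) else 0) - (if c ∈ S then (1 : ℤ) else 0)) ≤ 0 := by
  set f : Finset C → ℤ := fun S => (if c' ∈ S then (1 : ℤ) else 0) - (if c ∈ S then (1 : ℤ) else 0)
  constructor
  · intro h
    -- choose a profile achieving each sup'
    choose A hA hAsup using fun i =>
      Finset.exists_mem_eq_sup' (hsupp i) f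
    have hplaus : ∀ i, 0 < Δ i (A i) := fun i => (Finset.mem_filter.mp (hA i)).2
    have := (score_le_iff A c c').mp (h A hplaus)
    calc ∑ i : V, (Finset.univ.filter fun S : Finset C => 0 < Δ i S).sup' (hsupp i) f
        = ∑ i : V, f (A i) := by
          refine Finset.sum_congr rfl fun i _ => ?_
          exact hAsup i
      _ ≤ 0 := this
  · intro h A hA
    rw [score_le_iff A c c']
    refine le_trans (Finset.sum_le_sum fun i _ => ?_) h
    exact Finset.le_sup' f (Finset.mem_filter.mpr ⟨Finset.mem_univ _, hA i⟩)
end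

section
/- In the candidate probability model, let W ⊆ C with |W| = k, and define the profile Ā by Ā_i = {c ∈ W : p_{i,c} > 0} ∪ {c ∈ C \ W : p_{i,c} = 1} for each voter i. Then Ā is a plausible profile, and W is SWM in at least one plausible profile if and only if W is SWM in Ā. -/
open scoped Classical

lemma sw_eq {V C : Type*} [Fintype V] [DecidableEq C]
    (A : V → Finset C) (W : Finset C) :
    socialWelfare A W = ∑ c ∈ W, (Finset.univ.filter fun i => c ∈ A i).card := by
  calc socialWelfare A W = ∑ i : V, ∑ c ∈ W, if c ∈ A i then 1 else 0 := by
        unfold socialWelfare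
        refine Finset.sum_congr rfl fun i _ => ?_
        rw [← Finset.filter_mem_eq_inter, Finset.card_filter]
    _ = ∑ c ∈ W, ∑ i : V, if c ∈ A i then 1 else 0 := Finset.sum_comm
    _ = _ := by
        refine Finset.sum_congr rfl fun c _ => ?_
        rw [Finset.card_filter]

/-- A profile is plausible in the candidate probability model iff every certainly approved
candidate is approved and every approved candidate has positive approval probability. -/
def plausibleCP {V C : Type*} [Fintype C] (p : V → C → ℝ) (A : V → Finset C) : Prop :=
  ∀ i, (Finset.univ.filter fun c => p i c = 1) ⊆ A i ∧
    A i ⊆ (Finset.univ.filter fun c => 0 < p i c)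

/-- In the candidate probability model, with
`Ā_i = {c ∈ W : p_{i,c} > 0} ∪ {c ∈ C \ W : p_{i,c} = 1}`, the profile `Ā` is plausible, and
`W` is SWM in at least one plausible profile iff `W` is SWM in `Ā`. -/
theorem possSWM_iff_swm_in_constructed_profile
    {V C : Type*} [Fintype V] [Fintype C] [DecidableEq C]
    (k : ℕ) (hk1 : 1 ≤ k) (hkm : k ≤ Fintype.card C)
    (p : V → C → ℝ) (hp : ∀ i c, 0 ≤ p i c ∧ p i c ≤ 1)
    (W : Finset C) (hW : W.card = k) :
    plausibleCP p (fun i => (W.filter fun c => 0 < p i c) ∪ (Wᶜ.filter fun c => p i c = 1)) ∧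
      ((∃ A : V → Finset C, plausibleCP p A ∧ isSWM k A W) ↔
        isSWM k (fun i => (W.filter fun c => 0 < p i c) ∪ (Wᶜ.filter fun c => p i c = 1)) W) := by
  set Abar : V → Finset C :=
    fun i => (W.filter fun c => 0 < p i c) ∪ (Wᶜ.filter fun c => p i c = 1) with hAbar
  have hplaus : plausibleCP p Abar := by
    intro i
    constructor
    · intro c hc
      rw [Finset.mem_filter] at hc
      by_cases hcW : c ∈ W
      · exact Finset.mem_union_left _ (Finset.mem_filter.2 ⟨hcW, by rw [hc.2]; norm_num⟩)
      · exact Finset.mem_union_right _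
          (Finset.mem_filter.2 ⟨Finset.mem_compl.2 hcW, hc.2⟩)
    · intro c hc
      rcases Finset.mem_union.1 hc with h | h
      · exact Finset.mem_filter.2 ⟨Finset.mem_univ _, (Finset.mem_filter.1 h).2⟩
      · refine Finset.mem_filter.2 ⟨Finset.mem_univ _, ?_⟩
        rw [(Finset.mem_filter.1 h).2]; norm_num
  refine ⟨hplaus, ?_, fun h => ⟨Abar, hplaus, h⟩⟩
  rintro ⟨A, hA, hSWM⟩
  intro W' hW'
  -- per-candidate approval score comparisons
  have h1 : ∀ c ∈ W, (Finset.univ.filter fun i => c ∈ A i).card ≤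
      (Finset.univ.filter fun i => c ∈ Abar i).card := by
    intro c hc
    apply Finset.card_le_card
    intro i hi
    rw [Finset.mem_filter] at hi ⊢
    refine ⟨hi.1, Finset.mem_union_left _ (Finset.mem_filter.2 ⟨hc, ?_⟩)⟩
    have := (hA i).2 hi.2
    exact (Finset.mem_filter.1 this).2
  have h2 : ∀ c ∉ W, (Finset.univ.filter fun i => c ∈ Abar i).card ≤
      (Finset.univ.filter fun i => c ∈ A i).card := by
    intro c hc
    apply Finset.card_le_card
    intro i hi
    rw [Finset.mem_filter] at hi ⊢
    refine ⟨hi.1, ?_⟩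
    rcases Finset.mem_union.1 hi.2 with h | h
    · exact absurd (Finset.mem_filter.1 h).1 hc
    · exact (hA i).1 (Finset.mem_filter.2 ⟨Finset.mem_univ _, (Finset.mem_filter.1 h).2⟩)
  set f : C → ℕ := fun c => (Finset.univ.filter fun i => c ∈ A i).card
  set g : C → ℕ := fun c => (Finset.univ.filter fun i => c ∈ Abar i).card
  have key : socialWelfare Abar W' + socialWelfare A W ≤
      socialWelfare Abar W + socialWelfare A W' := by
    rw [sw_eq, sw_eq, sw_eq, sw_eq]
    rw [← Finset.sum_inter_add_sum_sdiff W' W g, ← Finset.sum_inter_add_sum_sdiff W W' f,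
      ← Finset.sum_inter_add_sum_sdiff W W' g, ← Finset.sum_inter_add_sum_sdiff W' W f]
    have e1 : W' ∩ W = W ∩ W' := Finset.inter_comm _ _
    rw [e1]
    have i1 : ∑ c ∈ W' \ W, g c ≤ ∑ c ∈ W' \ W, f c :=
      Finset.sum_le_sum fun c hc => h2 c (Finset.mem_sdiff.1 hc).2
    have i2 : ∑ c ∈ W \ W', f c ≤ ∑ c ∈ W \ W', g c :=
      Finset.sum_le_sum fun c hc => h1 c (Finset.mem_sdiff.1 hc).1
    omega
  have := hSWM W' hW'
  omega
end

section
/- In the candidate probability model, let W ⊆ C with |W| = k, and define the profile Ā by Ā_i = {c ∈ W : p_{i,c} = 1} ∪ {c ∈ C \ W : p_{i,c} > 0} for each voter i. Then Ā is a plausible profile, and W is SWM in every plausible profile if and only if W is SWM in Ā. -/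
open scoped Classical

/-- In the candidate probability model, with
`Ā_i = {c ∈ W : p_{i,c} = 1} ∪ {c ∈ C \ W : p_{i,c} > 0}`, the profile `Ā` is plausible, and
`W` is SWM in every plausible profile iff `W` is SWM in `Ā`. -/
theorem necSWM_iff_swm_in_constructed_profile
    {V C : Type*} [Fintype V] [Fintype C] [DecidableEq C]
    (k : ℕ) (hk1 : 1 ≤ k) (hkm : k ≤ Fintype.card C)
    (p : V → C → ℝ) (hp : ∀ i c, 0 ≤ p i c ∧ p i c ≤ 1)
    (W : Finset C) (hW : W.card = k) :
    plausibleCP p (fun i => (W.filter fun c => p i c = 1) ∪ (Wᶜ.filter fun c => 0 < p i c)) ∧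
      ((∀ A : V → Finset C, plausibleCP p A → isSWM k A W) ↔
        isSWM k (fun i => (W.filter fun c => p i c = 1) ∪ (Wᶜ.filter fun c => 0 < p i c)) W) := by
  set Abar : V → Finset C :=
    fun i => (W.filter fun c => p i c = 1) ∪ (Wᶜ.filter fun c => 0 < p i c) with hAbar
  have hplaus : plausibleCP p Abar := by
    intro i
    constructor
    · intro c hc
      simp only [Finset.mem_filter, Finset.mem_univ, true_and] at hc
      simp only [hAbar, Finset.mem_union, Finset.mem_filter, Finset.mem_compl]
      by_cases h : c ∈ W
      · exact Or.inl ⟨h, hc⟩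
      · exact Or.inr ⟨h, by rw [hc]; norm_num⟩
    · intro c hc
      simp only [hAbar, Finset.mem_union, Finset.mem_filter, Finset.mem_compl] at hc
      simp only [Finset.mem_filter, Finset.mem_univ, true_and]
      rcases hc with ⟨_, h1⟩ | ⟨_, h2⟩
      · rw [h1]; norm_num
      · exact h2
  refine ⟨hplaus, ?_, ?_⟩
  · intro h; exact h Abar hplaus
  · intro hSWM A hA W' hW'
    have key : ∀ i, (W' ∩ A i).card + (W ∩ Abar i).card ≤
        (W' ∩ Abar i).card + (W ∩ A i).card := by
      intro i
      have split : ∀ (X S Y : Finset C),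
          (X ∩ S).card = ((X ∩ Y) ∩ S).card + ((X \ Y) ∩ S).card := by
        intro X S Y
        rw [← Finset.card_union_of_disjoint]
        · congr 1
          ext c
          simp only [Finset.mem_inter, Finset.mem_union, Finset.mem_sdiff]
          tauto
        · rw [Finset.disjoint_left]
          intro c hc hc2
          simp only [Finset.mem_inter, Finset.mem_sdiff] at hc hc2
          tauto
      have s1 : (W' \ W) ∩ A i ⊆ (W' \ W) ∩ Abar i := by
        intro c hc
        simp only [Finset.mem_inter, Finset.mem_sdiff] at hc ⊢
        refine ⟨hc.1, ?_⟩
        have hpos := (hA i).2 hc.2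
        simp only [Finset.mem_filter, Finset.mem_univ, true_and] at hpos
        simp only [hAbar, Finset.mem_union, Finset.mem_filter, Finset.mem_compl]
        exact Or.inr ⟨hc.1.2, hpos⟩
      have s2 : (W \ W') ∩ Abar i ⊆ (W \ W') ∩ A i := by
        intro c hc
        simp only [Finset.mem_inter, Finset.mem_sdiff] at hc ⊢
        refine ⟨hc.1, ?_⟩
        have hc2 := hc.2
        simp only [hAbar, Finset.mem_union, Finset.mem_filter, Finset.mem_compl] at hc2
        rcases hc2 with ⟨_, h1⟩ | ⟨h2, _⟩
        · exact (hA i).1 (by simp [h1])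
        · exact absurd hc.1.1 h2
      have c1 := Finset.card_le_card s1
      have c2 := Finset.card_le_card s2
      rw [split W' (A i) W, split W' (Abar i) W, split W (A i) W',
        split W (Abar i) W', Finset.inter_comm W' W]
      omega
    have hsum : socialWelfare A W' + socialWelfare Abar W ≤
        socialWelfare Abar W' + socialWelfare A W := by
      unfold socialWelfare
      rw [← Finset.sum_add_distrib, ← Finset.sum_add_distrib]
      exact Finset.sum_le_sum fun i _ => key i
    have h2 := hSWM W' hW'
    unfold socialWelfare at *
    omega
end

section
/- In the candidate probability model, let Ā be the profile of certain approvals, Ā_i = {c ∈ C : p_{i,c} = 1} for each voter i. Suppose W* ⊆ C with |W*| = k is SWM in Ā and, among all committees of size k that are SWM in Ā, W* maximizes Σ_{i ∈ V} |{c ∈ W* : p_{i,c} > 0}|. Then there exists a committee of size k that is SWM in every plausible profile if and only if W* is SWM in every plausible profile. -/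
open scoped Classical

/-- Split `(X ∩ A).card` along a subset `B ⊆ A`. -/
lemma card_inter_split {C : Type*} [DecidableEq C] (X A B : Finset C) (h : B ⊆ A) :
    (X ∩ A).card = (X ∩ B).card + (X ∩ (A \ B)).card := by
  have hd : Disjoint (X ∩ B) (X ∩ (A \ B)) :=
    (Finset.disjoint_sdiff).mono Finset.inter_subset_right Finset.inter_subset_right
  rw [← Finset.card_union_of_disjoint hd, ← Finset.inter_union_distrib_left,
    Finset.union_sdiff_of_subset h]

/-- Split `(X ∩ S).card` along membership in `Y`. -/
lemma card_inter_split' {C : Type*} [DecidableEq C] (X Y S : Finset C) :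
    (X ∩ S).card = ((X ∩ Y) ∩ S).card + ((X \ Y) ∩ S).card := by
  have hd : Disjoint ((X ∩ Y) ∩ S) ((X \ Y) ∩ S) := by
    rw [Finset.disjoint_left]
    intro a ha hb
    simp only [Finset.mem_inter, Finset.mem_sdiff] at ha hb
    tauto
  have heq : X ∩ S = ((X ∩ Y) ∩ S) ∪ ((X \ Y) ∩ S) := by
    ext c
    simp only [Finset.mem_inter, Finset.mem_union, Finset.mem_sdiff]
    tauto
  rw [heq, Finset.card_union_of_disjoint hd]

/-- Let `Ā` be the profile of certain approvals,
`Ā_i = {c ∈ C : p_{i,c} = 1}`. Suppose `W*` of size `k` is SWM in `Ā` and, among all size-`k`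
committees that are SWM in `Ā`, maximizes `Σ_{i ∈ V} |{c ∈ W* : p_{i,c} > 0}|`. Then a size-`k`
committee that is SWM in every plausible profile exists iff `W*` is SWM in every plausible
profile. -/
theorem existsNecSWM_iff_constructed_committee
    {V C : Type*} [Fintype V] [Fintype C] [DecidableEq C]
    (k : ℕ) (hk1 : 1 ≤ k) (hkm : k ≤ Fintype.card C)
    (p : V → C → ℝ) (hp : ∀ i c, 0 ≤ p i c ∧ p i c ≤ 1)
    (Wstar : Finset C) (hWstar : Wstar.card = k)
    (hSWM : isSWM k (fun i => Finset.univ.filter fun c => p i c = 1) Wstar)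
    (hmax : ∀ W' : Finset C, W'.card = k →
      isSWM k (fun i => Finset.univ.filter fun c => p i c = 1) W' →
      ∑ i : V, (W'.filter fun c => 0 < p i c).card ≤
        ∑ i : V, (Wstar.filter fun c => 0 < p i c).card) :
    (∃ W : Finset C, W.card = k ∧ ∀ A : V → Finset C, plausibleCP p A → isSWM k A W) ↔
      (∀ A : V → Finset C, plausibleCP p A → isSWM k A Wstar) := by
  constructor
  · rintro ⟨W, hWk, hW⟩
    set Abar : V → Finset C := (fun i => Finset.univ.filter fun c => p i c = 1) with hAbarDef
    set Amax : V → Finset C := (fun i => Finset.univ.filter fun c => 0 < p i c) with hAmaxDef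
    have hsub : ∀ i, Abar i ⊆ Amax i := by
      intro i c hc
      simp only [hAbarDef, hAmaxDef, Finset.mem_filter] at hc ⊢
      exact ⟨hc.1, by rw [hc.2]; norm_num⟩
    have hAbarP : plausibleCP p Abar := fun i => ⟨Finset.Subset.refl _, hsub i⟩
    set n : Finset C → ℕ := fun X => ∑ i : V, (X ∩ (Amax i \ Abar i)).card with hnDef
    -- decomposition of social welfare at a plausible profile
    have hdec : ∀ (A : V → Finset C), plausibleCP p A → ∀ X : Finset C,
        socialWelfare A X = socialWelfare Abar X + ∑ i : V, (X ∩ (A i \ Abar i)).card := by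
      intro A hA X
      unfold socialWelfare
      rw [← Finset.sum_add_distrib]
      exact Finset.sum_congr rfl fun i _ => card_inter_split X (A i) (Abar i) (hA i).1
    -- monotonicity and additivity of n
    have nmono : ∀ X Y : Finset C, X ⊆ Y → n X ≤ n Y := fun X Y h =>
      Finset.sum_le_sum fun i _ =>
        Finset.card_le_card (Finset.inter_subset_inter h (Finset.Subset.refl _))
    have nadd : ∀ X Y : Finset C, n X = n (X ∩ Y) + n (X \ Y) := by
      intro X Y
      simp only [hnDef, ← Finset.sum_add_distrib]
      exact Finset.sum_congr rfl fun i _ => card_inter_split' X Y _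
    have nsub : ∀ X Y : Finset C, n (X ∪ Y) ≤ n X + n Y := by
      intro X Y
      simp only [hnDef, ← Finset.sum_add_distrib]
      apply Finset.sum_le_sum
      intro i _
      rw [Finset.union_inter_distrib_right]
      exact Finset.card_union_le _ _
    -- the key "star" property of the universal committee W
    have star : ∀ W' : Finset C, W'.card = k →
        socialWelfare Abar W' + n (W' \ W) ≤ socialWelfare Abar W := by
      intro W' hW'
      set B : V → Finset C := fun i => Abar i ∪ ((Amax i \ Abar i) ∩ (W' \ W)) with hBDef
      have hBP : plausibleCP p B := by
        intro i
        refine ⟨Finset.subset_union_left, ?_⟩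
        apply Finset.union_subset (hsub i)
        exact (Finset.inter_subset_left).trans ((Finset.sdiff_subset).trans
          (Finset.Subset.refl _))
      have hBsd : ∀ i, B i \ Abar i = (Amax i \ Abar i) ∩ (W' \ W) := by
        intro i
        ext c
        simp only [hBDef, Finset.mem_sdiff, Finset.mem_union, Finset.mem_inter]
        tauto
      have h1 := hW B hBP W' hW'
      rw [hdec B hBP W', hdec B hBP W] at h1
      have e1 : ∑ i : V, (W' ∩ (B i \ Abar i)).card = n (W' \ W) := by
        apply Finset.sum_congr rfl
        intro i _
        rw [hBsd i]
        congr 1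
        ext c
        simp only [Finset.mem_inter, Finset.mem_sdiff]
        tauto
      have e2 : ∑ i : V, (W ∩ (B i \ Abar i)).card = 0 := by
        apply Finset.sum_eq_zero
        intro i _
        rw [hBsd i, Finset.card_eq_zero]
        ext c
        simp only [Finset.mem_inter, Finset.mem_sdiff, Finset.notMem_empty, iff_false]
        tauto
      rw [e1, e2] at h1
      omega
    -- consequences at the certain profile
    have hWstarStar := star Wstar hWstar
    have hWle : socialWelfare Abar W ≤ socialWelfare Abar Wstar := hSWM W hWk
    have heq : socialWelfare Abar W = socialWelfare Abar Wstar := by omega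
    have hnWstarW : n (Wstar \ W) = 0 := by omega
    -- W is SWM at Abar, so hmax applies to it
    have hWSWM : isSWM k Abar W := by
      intro W'' hW''
      have := star W'' hW''
      omega
    have hfil : ∀ X : Finset C, (∑ i : V, (X.filter fun c => 0 < p i c).card)
        = socialWelfare Abar X + n X := by
      intro X
      unfold socialWelfare
      rw [← Finset.sum_add_distrib]
      apply Finset.sum_congr rfl
      intro i _
      have hx : (X.filter fun c => 0 < p i c) = X ∩ Amax i := by
        ext c
        simp [hAmaxDef]
      rw [hx, card_inter_split X (Amax i) (Abar i) (hsub i)]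
    have hmaxW := hmax W hWk hWSWM
    rw [hfil W, hfil Wstar] at hmaxW
    -- n (W \ Wstar) = 0
    have h4 : n Wstar = n (Wstar ∩ W) := by
      have := nadd Wstar W
      omega
    have h5 : n (Wstar ∩ W) ≤ n W := nmono _ _ Finset.inter_subset_right
    have h6 : n W = n (W ∩ Wstar) + n (W \ Wstar) := nadd W Wstar
    have h7 : n (W ∩ Wstar) = n (Wstar ∩ W) := by rw [Finset.inter_comm]
    have hnWWstar : n (W \ Wstar) = 0 := by omega
    -- conclude Wstar is universal
    intro A hA W'' hW''
    rw [hdec A hA W'', hdec A hA Wstar]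
    have hsplit : ∑ i : V, (W'' ∩ (A i \ Abar i)).card
        = (∑ i : V, ((W'' ∩ Wstar) ∩ (A i \ Abar i)).card)
          + ∑ i : V, ((W'' \ Wstar) ∩ (A i \ Abar i)).card := by
      rw [← Finset.sum_add_distrib]
      exact Finset.sum_congr rfl fun i _ => card_inter_split' _ _ _
    have hb1 : ∑ i : V, ((W'' ∩ Wstar) ∩ (A i \ Abar i)).card
        ≤ ∑ i : V, (Wstar ∩ (A i \ Abar i)).card :=
      Finset.sum_le_sum fun i _ => Finset.card_le_card
        (Finset.inter_subset_inter Finset.inter_subset_right (Finset.Subset.refl _))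
    have hb2 : ∑ i : V, ((W'' \ Wstar) ∩ (A i \ Abar i)).card ≤ n (W'' \ Wstar) := by
      apply Finset.sum_le_sum
      intro i _
      apply Finset.card_le_card
      apply Finset.inter_subset_inter (Finset.Subset.refl _)
      exact Finset.sdiff_subset_sdiff (hA i).2 (Finset.Subset.refl _)
    have hb3 : n (W'' \ Wstar) ≤ n (W'' \ W) := by
      have hs : W'' \ Wstar ⊆ (W'' \ W) ∪ (W \ Wstar) := by
        intro c hc
        simp only [Finset.mem_sdiff, Finset.mem_union] at hc ⊢
        by_cases h : c ∈ W <;> tauto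
      calc n (W'' \ Wstar) ≤ n ((W'' \ W) ∪ (W \ Wstar)) := nmono _ _ hs
        _ ≤ n (W'' \ W) + n (W \ Wstar) := nsub _ _
        _ = n (W'' \ W) := by omega
    have hstar'' := star W'' hW''
    omega
  · intro h
    exact ⟨Wstar, hWstar, h⟩
end

section
/- Let S_1, …, S_q ⊆ C be sets with |S_i| ≤ k for every i ∈ [q], and let r ≤ q be a positive integer. Then there exists an index set I ⊆ [q] with |I| = r and |⋃_{i ∈ I} S_i| ≤ k if and only if there exists a committee W ⊆ C with |W| = k such that W is SWM in the single-voter profile with approval set S_i for at least r indices i ∈ [q]. -/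
open scoped Classical

lemma extend_to_card {C : Type*} [Fintype C] [DecidableEq C] {T : Finset C} {k : ℕ}
    (h1 : T.card ≤ k) (h2 : k ≤ Fintype.card C) : ∃ W : Finset C, T ⊆ W ∧ W.card = k := by
  obtain ⟨u, hu1, _, hu3⟩ := Finset.exists_subsuperset_card_eq T.subset_univ
    h1 (by simpa using h2)
  exact ⟨u, hu1, hu3⟩

/-- Let `S_1, …, S_q ⊆ C` with `|S_i| ≤ k` and `1 ≤ r ≤ q`. There is an
index set `I ⊆ [q]` with `|I| = r` and `|⋃_{i ∈ I} S_i| ≤ k` iff there is a committee `W` of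
size `k` that is SWM in the single-voter profile with approval set `S_i` for at least `r`
indices `i`. -/
theorem minRUnion_iff_swm_count
    {C : Type*} [Fintype C] [DecidableEq C]
    (k : ℕ) (hk1 : 1 ≤ k) (hkm : k ≤ Fintype.card C)
    (q : ℕ) (S : Fin q → Finset C) (hS : ∀ i, (S i).card ≤ k)
    (r : ℕ) (hr1 : 1 ≤ r) (hrq : r ≤ q) :
    (∃ I : Finset (Fin q), I.card = r ∧ (I.biUnion S).card ≤ k) ↔
      (∃ W : Finset C, W.card = k ∧
        r ≤ (Finset.univ.filter fun i : Fin q =>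
          ∀ W' : Finset C, W'.card = k → (W' ∩ S i).card ≤ (W ∩ S i).card).card) := by
  -- key: for W of size k, the SWM condition for i is equivalent to S i ⊆ W
  have key : ∀ (W : Finset C), W.card = k → ∀ i : Fin q,
      ((∀ W' : Finset C, W'.card = k → (W' ∩ S i).card ≤ (W ∩ S i).card) ↔ S i ⊆ W) := by
    intro W hW i
    constructor
    · intro h
      obtain ⟨W', hsub, hcard⟩ := extend_to_card (hS i) hkm
      have h1 : (W' ∩ S i) = S i := Finset.inter_eq_right.mpr hsub
      have h2 := h W' hcard
      rw [h1] at h2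
      have h3 : (W ∩ S i).card ≤ (S i).card :=
        Finset.card_le_card (Finset.inter_subset_right)
      have heq : (W ∩ S i) = S i :=
        Finset.eq_of_subset_of_card_le Finset.inter_subset_right (by omega)
      rw [← heq]
      exact Finset.inter_subset_left
    · intro hsub W' _
      rw [Finset.inter_eq_right.mpr hsub]
      exact Finset.card_le_card Finset.inter_subset_right
  constructor
  · rintro ⟨I, hIcard, hIk⟩
    obtain ⟨W, hsub, hW⟩ := extend_to_card hIk hkm
    refine ⟨W, hW, ?_⟩
    rw [← hIcard]
    apply Finset.card_le_card
    intro i hi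
    simp only [Finset.mem_filter, Finset.mem_univ, true_and]
    rw [key W hW i]
    exact fun x hx => hsub (Finset.mem_biUnion.mpr ⟨i, hi, hx⟩)
  · rintro ⟨W, hW, hr⟩
    obtain ⟨I, hIsub, hIcard⟩ := Finset.exists_subset_card_eq hr
    refine ⟨I, hIcard, ?_⟩
    calc (I.biUnion S).card ≤ W.card := by
          apply Finset.card_le_card
          intro x hx
          obtain ⟨i, hi, hxi⟩ := Finset.mem_biUnion.mp hx
          have := (Finset.mem_filter.mp (hIsub hi)).2
          exact (key W hW i).mp this hxi
      _ = k := hW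
end

section
/- Consider the candidate probability model with a single voter (n = 1), approval probabilities p_c := p_{1,c} for c ∈ C, so that each subset A ⊆ C has probability w(A) = ∏_{c ∈ A} p_c · ∏_{c ∈ C \ A} (1 − p_c). If W ⊆ C with |W| = k satisfies p_c ≥ p_{c'} for every c ∈ W and c' ∈ C \ W (i.e., W consists of k candidates with the highest approval probabilities), then for every W' ⊆ C with |W'| = k: Σ_{A ⊆ C} w(A)·1[W is SWM in A] ≥ Σ_{A ⊆ C} w(A)·1[W' is SWM in A]. -/
open scoped Classical

/-- Characterization: a size-`k` committee `S` is SWM in `A` iff `A ⊆ S` or `S ⊆ A`. -/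
lemma swm_char {C : Type*} [Fintype C] [DecidableEq C] {k : ℕ}
    (hkm : k ≤ Fintype.card C) (S A : Finset C) (hS : S.card = k) :
    (∀ T : Finset C, T.card = k → (T ∩ A).card ≤ (S ∩ A).card) ↔ (A ⊆ S ∨ S ⊆ A) := by
  constructor
  · intro h
    by_cases hA : A.card ≤ k
    · obtain ⟨T, hAT, hTk⟩ := Finset.exists_superset_card_eq hA hkm
      have h1 := h T hTk
      rw [Finset.inter_eq_right.mpr hAT] at h1
      left
      have h2 : S ∩ A = A := Finset.eq_of_subset_of_card_le (Finset.inter_subset_right)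
        (by exact h1)
      exact fun x hx => (Finset.mem_inter.mp (h2 ▸ hx)).1
    · push_neg at hA
      obtain ⟨T, hTA, hTk⟩ := Finset.exists_subset_card_eq hA.le
      have h1 := h T hTk
      rw [Finset.inter_eq_left.mpr hTA, hTk] at h1
      right
      have h2 : S ∩ A = S := Finset.eq_of_subset_of_card_le (Finset.inter_subset_left)
        (by rw [hS]; exact h1)
      exact fun x hx => (Finset.mem_inter.mp (h2 ▸ hx)).2
  · rintro (hAS | hSA) T hT
    · calc (T ∩ A).card ≤ A.card := Finset.card_le_card Finset.inter_subset_right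
        _ = (S ∩ A).card := by rw [Finset.inter_eq_right.mpr hAS]
    · calc (T ∩ A).card ≤ T.card := Finset.card_le_card Finset.inter_subset_left
        _ = (S ∩ A).card := by rw [Finset.inter_eq_left.mpr hSA, hT, hS]

/-- Evaluation of the SWM probability for a committee `S`. -/
lemma sum_eval {C : Type*} [Fintype C] [DecidableEq C] (p : C → ℝ) (S : Finset C) :
    ∑ A : Finset C, ((∏ c ∈ A, p c) * ∏ c ∈ Aᶜ, (1 - p c)) *
        (if A ⊆ S ∨ S ⊆ A then (1 : ℝ) else 0)
      = (∏ c ∈ S, p c) + (∏ c ∈ Sᶜ, (1 - p c))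
        - (∏ c ∈ S, p c) * ∏ c ∈ Sᶜ, (1 - p c) := by
  set w : Finset C → ℝ := fun A => (∏ c ∈ A, p c) * ∏ c ∈ Aᶜ, (1 - p c) with hw
  have hsplit : ∀ A : Finset C,
      (if A ⊆ S ∨ S ⊆ A then (1 : ℝ) else 0)
      = (if A ⊆ S then (1:ℝ) else 0) + (if S ⊆ A then (1:ℝ) else 0)
        - (if A = S then (1:ℝ) else 0) := by
    intro A
    by_cases h3 : A = S
    · subst h3; simp
    · by_cases h1 : A ⊆ S <;> by_cases h2 : S ⊆ A
      · exact absurd (Finset.Subset.antisymm h1 h2) h3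
      all_goals simp [h1, h2, h3]
  have e1 : ∑ A : Finset C, w A * (if A ⊆ S then (1:ℝ) else 0) = ∏ c ∈ Sᶜ, (1 - p c) := by
    rw [Finset.sum_congr rfl (fun A _ => by rw [mul_ite, mul_one, mul_zero]),
      ← Finset.sum_filter]
    have hfil : (Finset.univ : Finset (Finset C)).filter (· ⊆ S) = S.powerset := by
      ext A; simp [Finset.mem_powerset]
    rw [hfil]
    have key : ∀ A ∈ S.powerset, w A
        = ((∏ c ∈ A, p c) * ∏ c ∈ S \ A, (1 - p c)) * ∏ c ∈ Sᶜ, (1 - p c) := by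
      intro A hA
      rw [Finset.mem_powerset] at hA
      have hcomp : Aᶜ = (S \ A) ∪ Sᶜ := by
        ext x; simp only [Finset.mem_compl, Finset.mem_union, Finset.mem_sdiff]
        constructor
        · intro hx; by_cases hxS : x ∈ S
          · exact Or.inl ⟨hxS, hx⟩
          · exact Or.inr hxS
        · rintro (⟨_, hx⟩ | hx)
          · exact hx
          · exact fun hxA => hx (hA hxA)
      have hdisj : Disjoint (S \ A) Sᶜ := by
        refine Finset.disjoint_left.mpr ?_
        intro x hx hx'
        exact (Finset.mem_compl.mp hx') (Finset.mem_sdiff.mp hx).1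
      rw [hw]; dsimp only
      rw [hcomp, Finset.prod_union hdisj]; ring
    rw [Finset.sum_congr rfl key, ← Finset.sum_mul]
    have : ∑ A ∈ S.powerset, (∏ c ∈ A, p c) * ∏ c ∈ S \ A, (1 - p c)
        = ∏ c ∈ S, (p c + (1 - p c)) := (Finset.prod_add p (fun c => 1 - p c) S).symm
    rw [this]
    simp
  have e2 : ∑ A : Finset C, w A * (if S ⊆ A then (1:ℝ) else 0) = ∏ c ∈ S, p c := by
    rw [Finset.sum_congr rfl (fun A _ => by rw [mul_ite, mul_one, mul_zero]),
      ← Finset.sum_filter]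
    have hfil : (Finset.univ : Finset (Finset C)).filter (S ⊆ ·)
        = Sᶜ.powerset.image (fun B => S ∪ B) := by
      ext A
      simp only [Finset.mem_filter, Finset.mem_univ, true_and, Finset.mem_image,
        Finset.mem_powerset]
      constructor
      · intro h
        refine ⟨A \ S, ?_, ?_⟩
        · intro x hx
          simp only [Finset.mem_sdiff] at hx
          exact Finset.mem_compl.mpr hx.2
        · ext x; simp only [Finset.mem_union, Finset.mem_sdiff]
          constructor
          · rintro (hx | ⟨hx, _⟩)
            · exact h hx
            · exact hx
          · intro hx; by_cases hxS : x ∈ S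
            · exact Or.inl hxS
            · exact Or.inr ⟨hx, hxS⟩
      · rintro ⟨B, _, rfl⟩
        exact Finset.subset_union_left
    rw [hfil]
    have hinj : ∀ B₁ ∈ Sᶜ.powerset, ∀ B₂ ∈ Sᶜ.powerset,
        S ∪ B₁ = S ∪ B₂ → B₁ = B₂ := by
      intro B₁ h₁ B₂ h₂ h
      rw [Finset.mem_powerset] at h₁ h₂
      ext x
      constructor
      · intro hx
        have : x ∈ S ∪ B₂ := h ▸ Finset.mem_union_right _ hx
        rcases Finset.mem_union.mp this with hxS | hxB
        · exact absurd hxS (Finset.mem_compl.mp (h₁ hx))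
        · exact hxB
      · intro hx
        have : x ∈ S ∪ B₁ := h ▸ Finset.mem_union_right _ hx
        rcases Finset.mem_union.mp this with hxS | hxB
        · exact absurd hxS (Finset.mem_compl.mp (h₂ hx))
        · exact hxB
    rw [Finset.sum_image hinj]
    have key : ∀ B ∈ Sᶜ.powerset, w (S ∪ B)
        = (∏ c ∈ S, p c) * ((∏ c ∈ B, p c) * ∏ c ∈ Sᶜ \ B, (1 - p c)) := by
      intro B hB
      rw [Finset.mem_powerset] at hB
      have hdisj : Disjoint S B := by
        refine Finset.disjoint_left.mpr ?_
        intro x hx hx'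
        exact (Finset.mem_compl.mp (hB hx')) hx
      have hcomp : (S ∪ B)ᶜ = Sᶜ \ B := by
        ext x
        simp only [Finset.mem_compl, Finset.mem_union, Finset.mem_sdiff]
        tauto
      rw [hw]; dsimp only
      rw [Finset.prod_union hdisj, hcomp]; ring
    rw [Finset.sum_congr rfl key, ← Finset.mul_sum]
    have : ∑ B ∈ Sᶜ.powerset, (∏ c ∈ B, p c) * ∏ c ∈ Sᶜ \ B, (1 - p c)
        = ∏ c ∈ Sᶜ, (p c + (1 - p c)) := (Finset.prod_add p (fun c => 1 - p c) Sᶜ).symm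
    rw [this]
    simp
  have e3 : ∑ A : Finset C, w A * (if A = S then (1:ℝ) else 0)
      = (∏ c ∈ S, p c) * ∏ c ∈ Sᶜ, (1 - p c) := by
    rw [Finset.sum_congr rfl (fun A _ => by rw [mul_ite, mul_one, mul_zero]),
      Finset.sum_ite_eq' Finset.univ S w]
    simp [hw]
  calc ∑ A : Finset C, w A * (if A ⊆ S ∨ S ⊆ A then (1:ℝ) else 0)
      = ∑ A : Finset C, (w A * (if A ⊆ S then (1:ℝ) else 0)
          + w A * (if S ⊆ A then (1:ℝ) else 0) - w A * (if A = S then (1:ℝ) else 0)) := by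
        refine Finset.sum_congr rfl fun A _ => ?_
        rw [hsplit A]; ring
    _ = (∏ c ∈ S, p c) + (∏ c ∈ Sᶜ, (1 - p c))
        - (∏ c ∈ S, p c) * ∏ c ∈ Sᶜ, (1 - p c) := by
        rw [Finset.sum_sub_distrib, Finset.sum_add_distrib, e1, e2, e3]; ring

/-- Product comparison via a bijection between sets of equal cardinality. -/
lemma prod_le_prod_of_card_eq {C : Type*} [DecidableEq C] {s t : Finset C}
    (hcard : s.card = t.card) (f g : C → ℝ)
    (hf : ∀ x ∈ s, 0 ≤ f x) (hle : ∀ x ∈ s, ∀ y ∈ t, f x ≤ g y) :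
    ∏ x ∈ s, f x ≤ ∏ y ∈ t, g y := by
  have e : {x // x ∈ s} ≃ {x // x ∈ t} := Finset.equivOfCardEq hcard
  rw [← Finset.prod_coe_sort s f, ← Finset.prod_coe_sort t g, ← Equiv.prod_comp e (fun y => g ↑y)]
  exact Finset.prod_le_prod (fun x _ => hf x x.2) (fun x _ => hle x x.2 (e x) (e x).2)

/-- Single-voter candidate probability model: if `W` consists of the `k`
candidates with the highest approval probabilities, then `W` maximizes the probability of
being SWM among all size-`k` committees. -/
theorem single_voter_topk_maximizes_swm_probability
    {C : Type*} [Fintype C] [DecidableEq C]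
    (k : ℕ) (hk1 : 1 ≤ k) (hkm : k ≤ Fintype.card C)
    (p : C → ℝ) (hp : ∀ c, 0 ≤ p c ∧ p c ≤ 1)
    (W : Finset C) (hW : W.card = k)
    (htop : ∀ c ∈ W, ∀ c' ∉ W, p c' ≤ p c)
    (W' : Finset C) (hW' : W'.card = k) :
    ∑ A : Finset C, ((∏ c ∈ A, p c) * ∏ c ∈ Aᶜ, (1 - p c)) *
        (if ∀ T : Finset C, T.card = k → (T ∩ A).card ≤ (W' ∩ A).card then (1 : ℝ) else 0)
      ≤ ∑ A : Finset C, ((∏ c ∈ A, p c) * ∏ c ∈ Aᶜ, (1 - p c)) *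
        (if ∀ T : Finset C, T.card = k → (T ∩ A).card ≤ (W ∩ A).card then (1 : ℝ) else 0) := by
  have rw1 : ∀ (S : Finset C), S.card = k →
      ∑ A : Finset C, ((∏ c ∈ A, p c) * ∏ c ∈ Aᶜ, (1 - p c)) *
        (if ∀ T : Finset C, T.card = k → (T ∩ A).card ≤ (S ∩ A).card then (1 : ℝ) else 0)
      = (∏ c ∈ S, p c) + (∏ c ∈ Sᶜ, (1 - p c))
        - (∏ c ∈ S, p c) * ∏ c ∈ Sᶜ, (1 - p c) := by
    intro S hS
    rw [← sum_eval p S]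
    refine Finset.sum_congr rfl fun A _ => ?_
    rw [if_congr (swm_char hkm S A hS) rfl rfl]
  rw [rw1 W hW, rw1 W' hW']
  -- abbreviations
  set a := ∏ c ∈ W, p c with ha
  set b := ∏ c ∈ Wᶜ, (1 - p c) with hb
  set a' := ∏ c ∈ W', p c with ha'
  set b' := ∏ c ∈ W'ᶜ, (1 - p c) with hb'
  have hcard : (W' \ W).card = (W \ W').card := by
    have h1 := Finset.card_sdiff_add_card_inter W' W
    have h2 := Finset.card_sdiff_add_card_inter W W'
    rw [Finset.inter_comm] at h2
    omega
  have haa : a' ≤ a := by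
    have hu1 : (W' \ W) ∪ (W' ∩ W) = W' := by ext x; simp; tauto
    have hu2 : (W \ W') ∪ (W' ∩ W) = W := by ext x; simp; tauto
    have hd1 : Disjoint (W' \ W) (W' ∩ W) := by
      rw [Finset.disjoint_left]; intro x hx hx'
      simp only [Finset.mem_sdiff, Finset.mem_inter] at hx hx'; tauto
    have hd2 : Disjoint (W \ W') (W' ∩ W) := by
      rw [Finset.disjoint_left]; intro x hx hx'
      simp only [Finset.mem_sdiff, Finset.mem_inter] at hx hx'; tauto
    have ea' : a' = (∏ c ∈ W' \ W, p c) * ∏ c ∈ W' ∩ W, p c := by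
      rw [← Finset.prod_union hd1, hu1]
    have ea : a = (∏ c ∈ W \ W', p c) * ∏ c ∈ W' ∩ W, p c := by
      rw [← Finset.prod_union hd2, hu2]
    rw [ea, ea']
    have hp1 : ∏ c ∈ W' \ W, p c ≤ ∏ c ∈ W \ W', p c := by
      refine prod_le_prod_of_card_eq hcard p p (fun x _ => (hp x).1) ?_
      intro x hx y hy
      exact htop y (Finset.mem_sdiff.mp hy).1 x (Finset.mem_sdiff.mp hx).2
    have hpos : (0:ℝ) ≤ ∏ c ∈ W' ∩ W, p c := Finset.prod_nonneg fun c _ => (hp c).1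
    exact mul_le_mul_of_nonneg_right hp1 hpos
  have hbb : b' ≤ b := by
    have hu1 : (W \ W') ∪ (Wᶜ ∩ W'ᶜ) = W'ᶜ := by
      ext x; simp only [Finset.mem_union, Finset.mem_sdiff, Finset.mem_compl,
        Finset.mem_inter]; tauto
    have hu2 : (W' \ W) ∪ (Wᶜ ∩ W'ᶜ) = Wᶜ := by
      ext x; simp only [Finset.mem_union, Finset.mem_sdiff, Finset.mem_compl,
        Finset.mem_inter]; tauto
    have hd1 : Disjoint (W \ W') (Wᶜ ∩ W'ᶜ) := by
      rw [Finset.disjoint_left]; intro x hx hx'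
      simp only [Finset.mem_sdiff, Finset.mem_compl, Finset.mem_inter] at hx hx'; tauto
    have hd2 : Disjoint (W' \ W) (Wᶜ ∩ W'ᶜ) := by
      rw [Finset.disjoint_left]; intro x hx hx'
      simp only [Finset.mem_sdiff, Finset.mem_compl, Finset.mem_inter] at hx hx'; tauto
    have eb' : b' = (∏ c ∈ W \ W', (1 - p c)) * ∏ c ∈ Wᶜ ∩ W'ᶜ, (1 - p c) := by
      rw [← Finset.prod_union hd1, hu1]
    have eb : b = (∏ c ∈ W' \ W, (1 - p c)) * ∏ c ∈ Wᶜ ∩ W'ᶜ, (1 - p c) := by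
      rw [← Finset.prod_union hd2, hu2]
    rw [eb, eb']
    have hp1 : ∏ c ∈ W \ W', (1 - p c) ≤ ∏ c ∈ W' \ W, (1 - p c) := by
      refine prod_le_prod_of_card_eq hcard.symm (fun c => 1 - p c) (fun c => 1 - p c)
        (fun x _ => by show (0:ℝ) ≤ 1 - p x; linarith [(hp x).2]) ?_
      intro x hx y hy
      show (1:ℝ) - p x ≤ 1 - p y
      have := htop x (Finset.mem_sdiff.mp hx).1 y (Finset.mem_sdiff.mp hy).2
      linarith
    have hpos : (0:ℝ) ≤ ∏ c ∈ Wᶜ ∩ W'ᶜ, (1 - p c) :=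
      Finset.prod_nonneg fun c _ => by linarith [(hp c).2]
    exact mul_le_mul_of_nonneg_right hp1 hpos
  have ha1 : a ≤ 1 := Finset.prod_le_one (fun c _ => (hp c).1) (fun c _ => (hp c).2)
  have hb1 : b ≤ 1 := Finset.prod_le_one (fun c _ => by linarith [(hp c).2])
    (fun c _ => by linarith [(hp c).1])
  have ha0 : 0 ≤ a' := Finset.prod_nonneg fun c _ => (hp c).1
  have hb0 : 0 ≤ b' := Finset.prod_nonneg fun c _ => by linarith [(hp c).2]
  nlinarith [mul_nonneg (sub_nonneg.mpr haa) (sub_nonneg.mpr hbb)]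
end

section
/- In the 3VA model (the candidate probability model with every p_{i,c} ∈ {0, 1/2, 1}), let W ⊆ C with |W| = k be any committee maximizing the expected social welfare, i.e., Σ_{c ∈ W} Σ_{i ∈ V} p_{i,c} ≥ Σ_{c ∈ W'} Σ_{i ∈ V} p_{i,c} for every W' ⊆ C with |W'| = k. Then W is (1/2, 1/2)-robust: Σ_{A} w(A)·1[SW(W, A) ≥ (1/2)·max_{W' ⊆ C, |W'| = k} SW(W', A)] ≥ 1/2, where the sum ranges over all approval profiles A. -/
open scoped Classical

private lemma pairing_aux {ι : Type*} [Fintype ι] (w g : ι → ℝ) (F : ι → ι)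
    (hF : Function.Involutive F) (hw : ∀ A, 0 ≤ w A) (hwF : ∀ A, w (F A) = w A)
    (hsum : ∑ A, w A = 1) (hg : ∀ A, g A = 0 ∨ g A = 1)
    (hkey : ∀ A, w A ≠ 0 → g A = 1 ∨ g (F A) = 1) :
    (1 : ℝ) / 2 ≤ ∑ A, w A * g A := by
  have hg0 : ∀ A, 0 ≤ g A := by
    intro A; rcases hg A with h | h <;> rw [h] <;> norm_num
  have h2 : ∑ A, w A * g (F A) = ∑ A, w A * g A := by
    refine Fintype.sum_bijective F hF.bijective _ _ ?_
    intro A; rw [hwF]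
  have h3 : (1 : ℝ) ≤ ∑ A, (w A * g A + w A * g (F A)) := by
    rw [← hsum]
    refine Finset.sum_le_sum ?_
    intro A _
    by_cases hA : w A = 0
    · rw [hA]; ring_nf; exact le_refl 0
    · rcases hkey A hA with h | h <;> rw [h] <;>
        nlinarith [hg0 A, hg0 (F A), hw A, (hw A).lt_of_ne (Ne.symm hA)]
  rw [Finset.sum_add_distrib, h2] at h3
  linarith

/-- In the 3VA model, any size-`k` committee maximizing the expected social
welfare is `(1/2, 1/2)`-robust: with probability at least `1/2`, its social welfare is at
least half of the optimal social welfare. -/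
theorem maxExpSW_is_half_half_robust_3VA
    {V C : Type*} [Fintype V] [DecidableEq V] [Fintype C] [DecidableEq C]
    (k : ℕ) (hk1 : 1 ≤ k) (hkm : k ≤ Fintype.card C)
    (p : V → C → ℝ) (h3va : ∀ i c, p i c = 0 ∨ p i c = 1 / 2 ∨ p i c = 1)
    (W : Finset C) (hW : W.card = k)
    (hmax : ∀ W' : Finset C, W'.card = k →
      ∑ c ∈ W', ∑ i : V, p i c ≤ ∑ c ∈ W, ∑ i : V, p i c) :
    (1 : ℝ) / 2 ≤
      ∑ A : V → Finset C,
        (∏ i : V, ∏ c : C, (if c ∈ A i then p i c else 1 - p i c)) *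
          (if (1 / 2 : ℝ) *
                ((((Finset.univ.filter fun W' : Finset C => W'.card = k).sup
                  fun W' => socialWelfare A W' : ℕ)) : ℝ)
              ≤ (socialWelfare A W : ℝ) then (1 : ℝ) else 0) := by
  classical
  have hp0 : ∀ i c, 0 ≤ p i c := by
    intro i c; rcases h3va i c with h | h | h <;> rw [h] <;> norm_num
  have hp1 : ∀ i c, p i c ≤ 1 := by
    intro i c; rcases h3va i c with h | h | h <;> rw [h] <;> norm_num
  set wf : (V → Finset C) → ℝ :=
    fun A => ∏ i : V, ∏ c : C, (if c ∈ A i then p i c else 1 - p i c) with hwf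
  set gf : (V → Finset C) → ℝ := fun A =>
    if (1 / 2 : ℝ) *
          ((((Finset.univ.filter fun W' : Finset C => W'.card = k).sup
            fun W' => socialWelfare A W' : ℕ)) : ℝ)
        ≤ (socialWelfare A W : ℝ) then (1 : ℝ) else 0 with hgf
  set F : (V → Finset C) → (V → Finset C) :=
    fun A i => symmDiff (A i) (Finset.univ.filter fun c => p i c = 1 / 2) with hFdef
  set μ : ℝ := ∑ c ∈ W, ∑ i : V, p i c with hμ
  -- membership in the flipped profile
  have hmem_half : ∀ (A : V → Finset C) i c, p i c = 1 / 2 → (c ∈ F A i ↔ c ∉ A i) := by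
    intro A i c h
    simp [hFdef, Finset.mem_symmDiff, h]
  have hmem_nothalf : ∀ (A : V → Finset C) i c, p i c ≠ 1 / 2 → (c ∈ F A i ↔ c ∈ A i) := by
    intro A i c h
    have h2 : ¬ p i c = 2⁻¹ := by simpa using h
    simp [hFdef, Finset.mem_symmDiff, h2]
  have hFinv : Function.Involutive F := by
    intro A; funext i
    show symmDiff (symmDiff (A i) _) _ = A i
    exact symmDiff_symmDiff_cancel_right _ (A i)
  have hwnn : ∀ A, 0 ≤ wf A := by
    intro A
    refine Finset.prod_nonneg fun i _ => Finset.prod_nonneg fun c _ => ?_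
    split
    · exact hp0 i c
    · linarith [hp1 i c]
  have hwF : ∀ A, wf (F A) = wf A := by
    intro A
    refine Finset.prod_congr rfl fun i _ => Finset.prod_congr rfl fun c _ => ?_
    by_cases h : p i c = 1 / 2
    · have h1 : (1 : ℝ) - p i c = p i c := by rw [h]; norm_num
      rw [h1, ite_self, ite_self]
    · rw [if_congr (hmem_nothalf A i c h) rfl rfl]
  -- consistency
  have hcons : ∀ A, wf A ≠ 0 → ∀ i c, (if c ∈ A i then p i c else 1 - p i c) ≠ 0 := by
    intro A hA i c
    rw [hwf, Finset.prod_ne_zero_iff] at hA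
    have := hA i (Finset.mem_univ i)
    rw [Finset.prod_ne_zero_iff] at this
    exact this c (Finset.mem_univ c)
  -- real form of social welfare
  have hSW : ∀ (A : V → Finset C) (W' : Finset C),
      (socialWelfare A W' : ℝ) = ∑ c ∈ W', ∑ i : V, (if c ∈ A i then (1 : ℝ) else 0) := by
    intro A W'
    have h1 : ∀ i, (W' ∩ A i).card = ∑ c ∈ W', if c ∈ A i then 1 else 0 := by
      intro i
      rw [← Finset.filter_mem_eq_inter, Finset.card_filter]
    rw [Finset.sum_comm]
    simp only [socialWelfare, h1]
    push_cast
    rfl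
  -- upper bound on any committee's welfare for consistent profiles
  have hbound : ∀ A, (∀ i c, (if c ∈ A i then p i c else 1 - p i c) ≠ 0) →
      ∀ W' : Finset C, (socialWelfare A W' : ℝ) ≤ 2 * ∑ c ∈ W', ∑ i : V, p i c := by
    intro A hA W'
    rw [hSW, Finset.mul_sum]
    refine Finset.sum_le_sum fun c _ => ?_
    rw [Finset.mul_sum]
    refine Finset.sum_le_sum fun i _ => ?_
    by_cases h : c ∈ A i
    · have := hA i c
      rw [if_pos h] at this
      rcases h3va i c with h0 | h0 | h0
      · exact absurd h0 this
      · rw [if_pos h, h0]; norm_num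
      · rw [if_pos h, h0]; norm_num
    · rw [if_neg h]
      linarith [hp0 i c]
  -- pair identity
  have hpairSW : ∀ A, (∀ i c, (if c ∈ A i then p i c else 1 - p i c) ≠ 0) →
      (socialWelfare A W : ℝ) + (socialWelfare (F A) W : ℝ) = 2 * μ := by
    intro A hA
    rw [hSW, hSW, hμ, ← Finset.sum_add_distrib, Finset.mul_sum]
    refine Finset.sum_congr rfl fun c _ => ?_
    rw [← Finset.sum_add_distrib, Finset.mul_sum]
    refine Finset.sum_congr rfl fun i _ => ?_
    have hA' := hA i c
    rcases h3va i c with h0 | h0 | h0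
    · have hni : c ∉ A i := by
        intro h; rw [if_pos h, h0] at hA'; exact hA' rfl
      have hni' : c ∉ F A i := by
        rw [hmem_nothalf A i c (by rw [h0]; norm_num)]; exact hni
      rw [if_neg hni, if_neg hni', h0]; ring
    · rw [h0]
      by_cases h : c ∈ A i
      · rw [if_pos h, if_neg ((hmem_half A i c h0).not.2 (by simp [h]))]
        norm_num
      · rw [if_neg h, if_pos ((hmem_half A i c h0).2 h)]
        norm_num
    · have hi : c ∈ A i := by
        by_contra h; rw [if_neg h, h0] at hA'; simp at hA'
      have hi' : c ∈ F A i := by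
        rw [hmem_nothalf A i c (by rw [h0]; norm_num)]; exact hi
      rw [if_pos hi, if_pos hi', h0]; ring
  -- nonemptiness of the set of size-k committees
  have hne : (Finset.univ.filter fun W' : Finset C => W'.card = k).Nonempty :=
    ⟨W, Finset.mem_filter.2 ⟨Finset.mem_univ _, hW⟩⟩
  -- main sufficient condition for the indicator to be 1
  have hmain : ∀ A, (∀ i c, (if c ∈ A i then p i c else 1 - p i c) ≠ 0) →
      μ ≤ (socialWelfare A W : ℝ) → gf A = 1 := by
    intro A hA hμA
    rw [hgf]
    refine if_pos ?_
    obtain ⟨W₀, hmem, hsup⟩ := Finset.exists_mem_eq_sup _ hne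
      (fun W' => socialWelfare A W')
    rw [hsup]
    have hk0 : W₀.card = k := (Finset.mem_filter.1 hmem).2
    have h1 := hbound A hA W₀
    have h2 := hmax W₀ hk0
    rw [hμ] at hμA
    linarith
  -- indicator values
  have hg01 : ∀ A, gf A = 0 ∨ gf A = 1 := by
    intro A; rw [hgf]; dsimp only; split
    · right; rfl
    · left; rfl
  -- key dichotomy
  have hkey : ∀ A, wf A ≠ 0 → gf A = 1 ∨ gf (F A) = 1 := by
    intro A hA
    have hconsA := hcons A hA
    have hconsFA := hcons (F A) (by rw [hwF]; exact hA)
    by_cases h : μ ≤ (socialWelfare A W : ℝ)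
    · exact Or.inl (hmain A hconsA h)
    · refine Or.inr (hmain (F A) hconsFA ?_)
      have := hpairSW A hconsA
      linarith
  -- total weight is 1
  have hsum1 : ∑ A : V → Finset C, wf A = 1 := by
    rw [hwf]
    have h1 : ∑ A : V → Finset C,
        ∏ i : V, ∏ c : C, (if c ∈ A i then p i c else 1 - p i c)
        = ∏ i : V, ∑ s : Finset C, ∏ c : C, (if c ∈ s then p i c else 1 - p i c) := by
      rw [Finset.prod_univ_sum (fun _ => Finset.univ)
        (fun i s => ∏ c : C, (if c ∈ s then p i c else 1 - p i c)),
        Fintype.piFinset_univ]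
    rw [h1]
    refine Finset.prod_eq_one fun i _ => ?_
    have h2 : ∀ s : Finset C, (∏ c : C, (if c ∈ s then p i c else 1 - p i c))
        = (∏ c ∈ s, p i c) * ∏ c ∈ Finset.univ \ s, (1 - p i c) := by
      intro s
      rw [Finset.prod_ite (fun c => p i c) (fun c => 1 - p i c)]
      congr 1
      · congr 1
        simp [Finset.filter_mem_eq_inter]
      · congr 1
        rw [Finset.sdiff_eq_filter]
    calc ∑ s : Finset C, ∏ c : C, (if c ∈ s then p i c else 1 - p i c)
        = ∑ s ∈ Finset.univ.powerset, (∏ c ∈ s, p i c) * ∏ c ∈ Finset.univ \ s, (1 - p i c) := by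
          rw [Finset.powerset_univ]
          exact Finset.sum_congr rfl fun s _ => h2 s
      _ = ∏ c : C, (p i c + (1 - p i c)) := (Finset.prod_add _ _ _).symm
      _ = 1 := by
          refine Finset.prod_eq_one fun c _ => ?_
          ring
  exact pairing_aux wf gf F hFinv hwnn hwF hsum1 hg01 hkey
end

section
/- For all α, β ∈ (0, 1] there exist a positive integer m and a probability p ∈ [0, 1] such that in the candidate probability instance with a single voter, m candidates C = {1, …, m}, approval probability p for every candidate, and committee size k = 1, no committee of size 1 is (α, β)-robust; that is, for every candidate c ∈ C: Σ_{A ⊆ C} p^{|A|}(1 − p)^{m − |A|}·1[ 1[c ∈ A] ≥ α·max_{c' ∈ C} 1[c' ∈ A] ] < β. -/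
open scoped Classical

private lemma aux_sum_powerset {ι : Type*} [DecidableEq ι] (s : Finset ι) (p : ℝ) :
    ∑ t ∈ s.powerset, p ^ t.card * (1 - p) ^ (s.card - t.card) = 1 := by
  have h := Finset.prod_add (fun _ : ι => p) (fun _ : ι => 1 - p) s
  have h2 : ∀ t ∈ s.powerset,
      (∏ _i ∈ t, p) * ∏ _i ∈ s \ t, (1 - p)
        = p ^ t.card * (1 - p) ^ (s.card - t.card) := by
    intro t ht
    rw [Finset.prod_const, Finset.prod_const,
      Finset.card_sdiff_of_subset (Finset.mem_powerset.mp ht)]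
  rw [← Finset.sum_congr rfl h2, ← h]
  simp

/-- For all `α, β ∈ (0, 1]` there is a single-voter candidate probability
instance (with `m` candidates each approved independently with probability `p` and committee
size `1`) in which no committee of size `1` is `(α, β)`-robust. -/
theorem no_robust_committee_candidate_probability
    (α β : ℝ) (hα : 0 < α ∧ α ≤ 1) (hβ : 0 < β ∧ β ≤ 1) :
    ∃ m : ℕ, 0 < m ∧ ∃ p : ℝ, 0 ≤ p ∧ p ≤ 1 ∧
      ∀ c : Fin m,
        ∑ A : Finset (Fin m), p ^ A.card * (1 - p) ^ (m - A.card) *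
            (if α * (((Finset.univ.sup fun c' : Fin m =>
                  if c' ∈ A then (1 : ℕ) else 0) : ℕ) : ℝ)
                ≤ (if c ∈ A then (1 : ℝ) else 0) then (1 : ℝ) else 0)
          < β := by
  obtain ⟨hα0, hα1⟩ := hα
  obtain ⟨hβ0, hβ1⟩ := hβ
  set p : ℝ := β / 2 with hp_def
  have hp0 : 0 < p := by positivity
  have hp1 : p ≤ 1 / 2 := by
    rw [hp_def]; linarith
  have h1p0 : 0 ≤ 1 - p := by linarith
  have h1p1 : 1 - p < 1 := by linarith
  obtain ⟨n, hn⟩ := exists_pow_lt_of_lt_one (by positivity : (0:ℝ) < β / 2) h1p1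
  refine ⟨max n 1, lt_of_lt_of_le one_pos (le_max_right n 1), p, le_of_lt hp0,
    by linarith, ?_⟩
  set m : ℕ := max n 1 with hm_def
  have hpowm : (1 - p) ^ m < β / 2 :=
    lt_of_le_of_lt (pow_le_pow_of_le_one h1p0 (by linarith) (le_max_left n 1)) hn
  intro c
  -- abbreviations
  set ind : Finset (Fin m) → ℝ := fun A =>
    (if α * (((Finset.univ.sup fun c' : Fin m =>
          if c' ∈ A then (1 : ℕ) else 0) : ℕ) : ℝ)
        ≤ (if c ∈ A then (1 : ℝ) else 0) then (1 : ℝ) else 0) with hind_def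
  set w : Finset (Fin m) → ℝ := fun A =>
    p ^ A.card * (1 - p) ^ (m - A.card) * ind A with hw_def
  -- indicator facts
  have ind_mem : ∀ A : Finset (Fin m), c ∈ A → ind A = 1 := by
    intro A hc
    have hsup : (Finset.univ.sup fun c' : Fin m =>
        if c' ∈ A then (1 : ℕ) else 0) ≤ 1 := by
      apply Finset.sup_le; intro b _; split <;> simp
    have : α * (((Finset.univ.sup fun c' : Fin m =>
        if c' ∈ A then (1 : ℕ) else 0) : ℕ) : ℝ) ≤ 1 := by
      calc α * _ ≤ 1 * 1 := by
            apply mul_le_mul hα1 _ (by positivity) zero_le_one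
            exact_mod_cast hsup
        _ = 1 := by ring
    simp [hind_def, hc, this]
  have ind_empty : ind ∅ = 1 := by
    have h0 : (Finset.univ.sup fun _ : Fin m => (0 : ℕ)) = 0 :=
      Nat.le_antisymm (Finset.sup_le fun _ _ => le_rfl) (Nat.zero_le _)
    simp [hind_def, h0]
  have ind_notmem : ∀ A : Finset (Fin m), c ∉ A → A ≠ ∅ → ind A = 0 := by
    intro A hc hA
    obtain ⟨a, ha⟩ := Finset.nonempty_iff_ne_empty.mpr hA
    have hsup : (1 : ℕ) ≤ Finset.univ.sup fun c' : Fin m =>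
        if c' ∈ A then (1 : ℕ) else 0 := by
      have := Finset.le_sup (f := fun c' : Fin m =>
        if c' ∈ A then (1 : ℕ) else 0) (Finset.mem_univ a)
      simpa [ha] using this
    have : ¬ (α * (((Finset.univ.sup fun c' : Fin m =>
        if c' ∈ A then (1 : ℕ) else 0) : ℕ) : ℝ) ≤ 0) := by
      push_neg
      have : (1 : ℝ) ≤ ((Finset.univ.sup fun c' : Fin m =>
          if c' ∈ A then (1 : ℕ) else 0 : ℕ) : ℝ) := by exact_mod_cast hsup
      nlinarith
    simp [hind_def, hc, this]
  -- rewrite sum over powerset of univ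
  have hcmem : c ∈ (Finset.univ : Finset (Fin m)) := Finset.mem_univ c
  set s : Finset (Fin m) := Finset.univ.erase c with hs_def
  have hcs : c ∉ s := Finset.notMem_erase c _
  have hins : insert c s = Finset.univ := Finset.insert_erase hcmem
  have hscard : s.card = m - 1 := by
    rw [hs_def, Finset.card_erase_of_mem hcmem, Finset.card_univ, Fintype.card_fin]
  have hsum : ∑ A : Finset (Fin m), w A
      = ∑ t ∈ s.powerset, w t + ∑ t ∈ s.powerset, w (insert c t) := by
    rw [← Finset.sum_powerset_insert hcs, hins, Finset.powerset_univ]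
  -- second sum equals p
  have hsum2 : ∑ t ∈ s.powerset, w (insert c t) = p := by
    have : ∀ t ∈ s.powerset, w (insert c t)
        = p * (p ^ t.card * (1 - p) ^ (s.card - t.card)) := by
      intro t ht
      have htc : c ∉ t := fun h => hcs (Finset.mem_powerset.mp ht h)
      have hcard : (insert c t).card = t.card + 1 := Finset.card_insert_of_notMem htc
      have hie : ind (insert c t) = 1 := ind_mem _ (Finset.mem_insert_self c t)
      rw [hw_def]
      simp only [hcard, hie, mul_one, hscard]
      rw [show m - (t.card + 1) = m - 1 - t.card from by omega]
      ring
    rw [Finset.sum_congr rfl this, ← Finset.mul_sum, aux_sum_powerset, mul_one]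
  -- first sum equals (1-p)^m
  have hsum1 : ∑ t ∈ s.powerset, w t = (1 - p) ^ m := by
    rw [Finset.sum_eq_single_of_mem ∅ (Finset.empty_mem_powerset s)]
    · simp [hw_def, ind_empty]
    · intro t ht hne
      have htc : c ∉ t := fun h => hcs (Finset.mem_powerset.mp ht h)
      simp [hw_def, ind_notmem t htc hne]
  calc ∑ A : Finset (Fin m), w A = (1 - p) ^ m + p := by
        rw [hsum, hsum1, hsum2]
    _ < β / 2 + β / 2 := by
        apply add_lt_add_of_lt_of_le hpowm
        rw [hp_def]
    _ = β := by ring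
end
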